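/- Let σ₁, σ₂, σ₃ be reals, not all zero, with σ₁ + σ₂ + σ₃ = 0, and set τ₀ = √((σ₁² + σ₂² + σ₃²)/3) > 0 and p = ((σ₃−σ₂)/τ₀, (σ₁−σ₃)/τ₀, (σ₂−σ₁)/τ₀). For every real t such that 0 ≤ 1/3 + t·pᵢ/3 ≤ 1 for i = 1,2,3, the vector n(t) = (√(1/3 + t·p₁/3), √(1/3 + t·p₂/3), √(1/3 + t·p₃/3)) is a unit vector satisfying σ₁n(t)₁² + σ₂n(t)₂² + σ₃n(t)₃² = 0; that is, n(t) is a pure shear axis for every admissible t, with n(0) the cube diagonal (1,1,1)/√3. -/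
import Mathlib

noncomputable section

def tau0 (σ₁ σ₂ σ₃ : ℝ) : ℝ := Real.sqrt ((σ₁^2 + σ₂^2 + σ₃^2) / 3)

def ncurve (σ₁ σ₂ σ₃ t : ℝ) : ℝ × ℝ × ℝ :=
  (Real.sqrt (1/3 + t * ((σ₃ - σ₂) / tau0 σ₁ σ₂ σ₃) / 3),
   Real.sqrt (1/3 + t * ((σ₁ - σ₃) / tau0 σ₁ σ₂ σ₃) / 3),
   Real.sqrt (1/3 + t * ((σ₂ - σ₁) / tau0 σ₁ σ₂ σ₃) / 3))

/-- for a nonzero pure shear state, every admissible t gives a unit vector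
n(t) which is a pure shear axis; t = 0 gives the cube diagonal. -/
theorem stmt17 (σ₁ σ₂ σ₃ : ℝ)
    (hne : ¬(σ₁ = 0 ∧ σ₂ = 0 ∧ σ₃ = 0))
    (hshear : σ₁ + σ₂ + σ₃ = 0) :
    0 < tau0 σ₁ σ₂ σ₃ ∧
    (∀ t : ℝ,
      (0 ≤ 1/3 + t * ((σ₃ - σ₂) / tau0 σ₁ σ₂ σ₃) / 3 ∧
        1/3 + t * ((σ₃ - σ₂) / tau0 σ₁ σ₂ σ₃) / 3 ≤ 1) →
      (0 ≤ 1/3 + t * ((σ₁ - σ₃) / tau0 σ₁ σ₂ σ₃) / 3 ∧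
        1/3 + t * ((σ₁ - σ₃) / tau0 σ₁ σ₂ σ₃) / 3 ≤ 1) →
      (0 ≤ 1/3 + t * ((σ₂ - σ₁) / tau0 σ₁ σ₂ σ₃) / 3 ∧
        1/3 + t * ((σ₂ - σ₁) / tau0 σ₁ σ₂ σ₃) / 3 ≤ 1) →
      ((ncurve σ₁ σ₂ σ₃ t).1^2 + (ncurve σ₁ σ₂ σ₃ t).2.1^2 + (ncurve σ₁ σ₂ σ₃ t).2.2^2 = 1 ∧
       σ₁ * (ncurve σ₁ σ₂ σ₃ t).1^2 + σ₂ * (ncurve σ₁ σ₂ σ₃ t).2.1^2 +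
         σ₃ * (ncurve σ₁ σ₂ σ₃ t).2.2^2 = 0)) ∧
    ncurve σ₁ σ₂ σ₃ 0 = (1 / Real.sqrt 3, 1 / Real.sqrt 3, 1 / Real.sqrt 3) := by
  have hpos : 0 < (σ₁^2 + σ₂^2 + σ₃^2) / 3 := by
    rcases not_and_or.mp hne with h | h
    · positivity
    rcases not_and_or.mp h with h | h <;> positivity
  have hτ : 0 < tau0 σ₁ σ₂ σ₃ := Real.sqrt_pos.mpr hpos
  have hτne : tau0 σ₁ σ₂ σ₃ ≠ 0 := ne_of_gt hτ
  refine ⟨hτ, fun t h1 h2 h3 => ?_, ?_⟩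
  · simp only [ncurve, Real.sq_sqrt h1.1, Real.sq_sqrt h2.1, Real.sq_sqrt h3.1]
    constructor
    · field_simp
      ring
    · field_simp
      try linear_combination (tau0 σ₁ σ₂ σ₃) * hshear
  · simp only [ncurve, mul_zero, zero_mul, zero_div, add_zero]
    rw [show (1:ℝ)/3 = 3⁻¹ by norm_num, Real.sqrt_inv, inv_eq_one_div]
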